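/- arXiv:1907.11100 — 3 statements merged into one kernel-verified Lean document; each statement's English description precedes it below -/
import Mathlib

section
/- Let q be a prime power, n a positive integer, and k ≤ n. For every tuple (α_0, …, α_{k-1}) ∈ F_{q^n}^k, the determinant of the k×k Moore matrix whose (r,s) entry is α_r^{q^s} (0 ≤ r, s ≤ k−1) equals the nested product ∏_{j=0}^{k-1} ∏_{(c_0,…,c_{j-1}) ∈ F_q^j} (α_j + c_{j-1}α_{j-1} + ⋯ + c_0α_0). -/
/-!
Fix `β = (α_0, …, α_{k-1})` and expand `det M(β, x)` along its last row: it is a polynomial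
`∑ a_s x^(q^s)` in `x` of degree `q^k` whose leading coefficient is `det M(β)`. Since
`x ↦ x^q` is additive and fixes `𝔽_q`, an `𝔽_q`-linear relation between the rows of a Moore
matrix is also one between its columns, so every `x = -(c_0 α_0 + ⋯ + c_{k-1} α_{k-1})`,
`c ∈ 𝔽_q^k`, is a root. If these `q^k` values are distinct they are all the roots and
`det M(β, x) = det M(β) ∏_c (x + c·β)`, which gives the product formula by induction on `k`;
otherwise `β` itself satisfies an `𝔽_q`-relation and both sides vanish. In a field of order
`q^n` the fixed points of `x ↦ x^q` are the roots of the separable, split polynomial `X^q - X`,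
so there are exactly `q` of them.
-/

open Polynomial Finset Matrix

def mooreMatrix {R : Type*} [Monoid R] (q : ℕ) {k : ℕ} (α : Fin k → R) :
    Matrix (Fin k) (Fin k) R :=
  Matrix.of fun r s => α r ^ q ^ (s : ℕ)

/-- `𝔽_q ^ k` inside `F ^ k`, with `𝔽_q` cut out as the fixed points of `x ↦ x ^ q`. -/
def fixedVectors (F : Type*) [Monoid F] [Fintype F] [DecidableEq F] (q k : ℕ) :
    Finset (Fin k → F) :=
  {c | ∀ t, c t ^ q = c t}

section Linearized

variable {R : Type*} [Semiring R] {q : ℕ}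

theorem natDegree_sum_C_mul_X_pow_pow_le (hq : q ≠ 0) {k : ℕ} (a : Fin (k + 1) → R) :
    (∑ s, C (a s) * X ^ q ^ (s : ℕ)).natDegree ≤ q ^ k := by
  refine natDegree_sum_le_of_forall_le _ _ fun s _ => (natDegree_C_mul_X_pow_le _ _).trans ?_
  exact Nat.pow_le_pow_right (Nat.pos_of_ne_zero hq) (Nat.lt_succ_iff.mp s.isLt)

theorem coeff_sum_C_mul_X_pow_pow (hq : 1 < q) {k : ℕ} (a : Fin (k + 1) → R) :
    (∑ s, C (a s) * X ^ q ^ (s : ℕ)).coeff (q ^ k) = a (Fin.last k) := by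
  rw [finsetSum_coeff, Finset.sum_eq_single (Fin.last k)]
  · simp
  · intro s _ hs
    rw [coeff_C_mul_X_pow, if_neg]
    exact fun h => hs (Fin.ext (Nat.pow_right_injective hq h).symm)
  · simp

end Linearized

theorem Polynomial.eq_C_mul_prod_X_sub_C_of_natDegree_le {R : Type*} [CommRing R] [IsDomain R]
    (s : Finset R) {P : R[X]} (hdeg : P.natDegree ≤ #s) (hroot : ∀ x ∈ s, P.eval x = 0) :
    P = C (P.coeff #s) * ∏ x ∈ s, (X - C x) := by
  have hmonic : (∏ x ∈ s, (X - C x)).Monic := monic_prod_X_sub_C id s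
  have hprod : (∏ x ∈ s, (X - C x)).natDegree = #s := natDegree_finsetProd_X_sub_C_eq_card s id
  refine eq_of_degree_sub_lt_of_eval_finset_eq s ?_ fun x hx => ?_
  · refine (degree_lt_iff_coeff_zero _ _).mpr fun m hm => ?_
    rcases hm.eq_or_lt with rfl | hm
    · rw [coeff_sub, coeff_C_mul, ← hprod, hmonic.coeff_natDegree, mul_one, sub_self]
    · rw [coeff_sub, coeff_C_mul, coeff_eq_zero_of_natDegree_lt (hdeg.trans_lt hm),
        coeff_eq_zero_of_natDegree_lt (hprod.trans_lt hm), mul_zero, sub_zero]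
  · simp [hroot x hx, eval_prod, Finset.prod_eq_zero hx]

section AdditivePower

variable {F : Type*} [CommRing F] {q : ℕ}

theorem sub_pow_of_add_pow (hadd : ∀ x y : F, (x + y) ^ q = x ^ q + y ^ q) (x y : F) :
    (x - y) ^ q = x ^ q - y ^ q := by
  rw [eq_sub_iff_add_eq, ← hadd, sub_add_cancel]

theorem dotProduct_pow_of_add_pow (hadd : ∀ x y : F, (x + y) ^ q = x ^ q + y ^ q)
    {ι : Type*} [Fintype ι] {c : ι → F} (hc : ∀ t, c t ^ q = c t) (g : ι → F) :
    (c ⬝ᵥ g) ^ q = c ⬝ᵥ fun t => g t ^ q := by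
  have := map_sum (AddMonoidHom.mk' (· ^ q) hadd) (fun t => c t * g t) univ
  simpa only [dotProduct, AddMonoidHom.mk'_apply, mul_pow, hc] using this

theorem dotProduct_pow_pow_of_add_pow (hadd : ∀ x y : F, (x + y) ^ q = x ^ q + y ^ q)
    {ι : Type*} [Fintype ι] {c : ι → F} (hc : ∀ t, c t ^ q = c t) (g : ι → F) (s : ℕ) :
    (c ⬝ᵥ g) ^ q ^ s = c ⬝ᵥ fun t => g t ^ q ^ s := by
  induction s with
  | zero => simp
  | succ s ih => simp only [pow_succ, pow_mul, ih, dotProduct_pow_of_add_pow hadd hc]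

variable [Fintype F] [DecidableEq F]

theorem mem_fixedVectors {k : ℕ} {c : Fin k → F} :
    c ∈ fixedVectors F q k ↔ ∀ t, c t ^ q = c t := by
  simp [fixedVectors]

theorem card_fixedVectors (k : ℕ) : #(fixedVectors F q k) = #{x : F | x ^ q = x} ^ k := by
  have : fixedVectors F q k = Fintype.piFinset fun _ => ({x : F | x ^ q = x} : Finset F) := by
    ext c
    simp [mem_fixedVectors, Fintype.mem_piFinset]
  rw [this, Fintype.card_piFinset, prod_const, card_univ, Fintype.card_fin]

theorem snoc_mem_fixedVectors {k : ℕ} {c : Fin k → F} {a : F} (hc : c ∈ fixedVectors F q k)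
    (ha : a ^ q = a) : (Fin.snoc c a : Fin (k + 1) → F) ∈ fixedVectors F q (k + 1) := by
  rw [mem_fixedVectors] at hc ⊢
  exact Fin.lastCases (by simpa using ha) (fun t => by simpa using hc t)

theorem sub_mem_fixedVectors (hadd : ∀ x y : F, (x + y) ^ q = x ^ q + y ^ q) {k : ℕ}
    {c c' : Fin k → F} (hc : c ∈ fixedVectors F q k) (hc' : c' ∈ fixedVectors F q k) :
    c - c' ∈ fixedVectors F q k := by
  rw [mem_fixedVectors] at hc hc' ⊢
  intro t
  rw [Pi.sub_apply, sub_pow_of_add_pow hadd, hc, hc']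

end AdditivePower

section Moore

variable {F : Type*} [Field F] {q : ℕ}

theorem det_mooreMatrix_eq_zero_of_dotProduct_eq_zero
    (hadd : ∀ x y : F, (x + y) ^ q = x ^ q + y ^ q) (hq : q ≠ 0) {m : ℕ} {b γ : Fin m → F}
    (hb : b ≠ 0) (hbq : ∀ t, b t ^ q = b t) (hbγ : b ⬝ᵥ γ = 0) : (mooreMatrix q γ).det = 0 := by
  refine exists_vecMul_eq_zero_iff.mp ⟨b, hb, funext fun s => ?_⟩
  change b ⬝ᵥ (fun r => γ r ^ q ^ (s : ℕ)) = 0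
  rw [← dotProduct_pow_pow_of_add_pow hadd hbq, hbγ, zero_pow (pow_ne_zero _ hq)]

theorem snoc_dotProduct_snoc {k : ℕ} (c β : Fin k → F) (a x : F) :
    (Fin.snoc c a : Fin (k + 1) → F) ⬝ᵥ Fin.snoc β x = c ⬝ᵥ β + a * x := by
  simp [dotProduct, Fin.sum_univ_castSucc]

/-- The cofactor expansion of `det (mooreMatrix q (Fin.snoc β X))` along its last row. -/
noncomputable def mooreDetPoly (q : ℕ) {k : ℕ} (β : Fin k → F) : F[X] :=
  ∑ s : Fin (k + 1), C ((-1) ^ (k + s : ℕ) *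
    (Matrix.of fun r t : Fin k => β r ^ q ^ (s.succAbove t : ℕ)).det) * X ^ q ^ (s : ℕ)

theorem eval_mooreDetPoly {k : ℕ} (β : Fin k → F) (x : F) :
    (mooreDetPoly q β).eval x = (mooreMatrix q (Fin.snoc β x)).det := by
  rw [det_succ_row _ (Fin.last k), mooreDetPoly, eval_finsetSum]
  refine sum_congr rfl fun s _ => ?_
  simp [mooreMatrix, Matrix.submatrix, Fin.succAbove_last]
  ring

theorem natDegree_mooreDetPoly_le (hq : q ≠ 0) {k : ℕ} (β : Fin k → F) :
    (mooreDetPoly q β).natDegree ≤ q ^ k :=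
  natDegree_sum_C_mul_X_pow_pow_le hq _

theorem coeff_mooreDetPoly (hq : 1 < q) {k : ℕ} (β : Fin k → F) :
    (mooreDetPoly q β).coeff (q ^ k) = (mooreMatrix q β).det := by
  rw [mooreDetPoly, coeff_sum_C_mul_X_pow_pow hq]
  simp [mooreMatrix, Fin.succAbove_last, ← two_mul, pow_mul]

variable [Fintype F] [DecidableEq F]

theorem det_mooreMatrix_snoc_of_injOn (hadd : ∀ x y : F, (x + y) ^ q = x ^ q + y ^ q)
    (hq : 1 < q) (hS : #{x : F | x ^ q = x} = q) {k : ℕ} {β : Fin k → F}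
    (hinj : Set.InjOn (· ⬝ᵥ β) (fixedVectors F q k)) (x : F) :
    (mooreMatrix q (Fin.snoc β x)).det =
      (mooreMatrix q β).det * ∏ c ∈ fixedVectors F q k, (x + c ⬝ᵥ β) := by
  have hq0 : q ≠ 0 := by omega
  have hinj' : Set.InjOn (fun c => -(c ⬝ᵥ β)) (fixedVectors F q k) :=
    neg_injective.comp_injOn hinj
  set roots := (fixedVectors F q k).image fun c => -(c ⬝ᵥ β)
  have hcard : #roots = q ^ k := by
    rw [card_image_of_injOn hinj', card_fixedVectors, hS]
  have hroot : ∀ y ∈ roots, (mooreDetPoly q β).eval y = 0 := by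
    simp only [roots, mem_image, forall_exists_index, and_imp, forall_apply_eq_imp_iff₂]
    intro c hc
    rw [eval_mooreDetPoly]
    refine det_mooreMatrix_eq_zero_of_dotProduct_eq_zero hadd hq0 (b := Fin.snoc c 1) ?_
      (mem_fixedVectors.mp (snoc_mem_fixedVectors hc (one_pow q))) ?_
    · intro h
      simpa using congrFun h (Fin.last k)
    · rw [snoc_dotProduct_snoc]
      ring
  have h := eq_C_mul_prod_X_sub_C_of_natDegree_le roots
    (hcard ▸ natDegree_mooreDetPoly_le hq0 β) hroot
  rw [hcard, coeff_mooreDetPoly hq] at h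
  rw [← eval_mooreDetPoly, h, eval_mul, eval_C, eval_prod, prod_image hinj']
  simp

theorem det_mooreMatrix_snoc (hadd : ∀ x y : F, (x + y) ^ q = x ^ q + y ^ q)
    (hq : 1 < q) (hS : #{x : F | x ^ q = x} = q) {k : ℕ} (β : Fin k → F) (x : F) :
    (mooreMatrix q (Fin.snoc β x)).det =
      (mooreMatrix q β).det * ∏ c ∈ fixedVectors F q k, (x + c ⬝ᵥ β) := by
  by_cases hinj : Set.InjOn (· ⬝ᵥ β) (fixedVectors F q k)
  · exact det_mooreMatrix_snoc_of_injOn hadd hq hS hinj x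
  have hq0 : q ≠ 0 := by omega
  obtain ⟨c, hc, c', hc', hcc', hne⟩ : ∃ c ∈ fixedVectors F q k, ∃ c' ∈ fixedVectors F q k,
      c ⬝ᵥ β = c' ⬝ᵥ β ∧ c ≠ c' := by
    simpa [Set.InjOn] using hinj
  have hsub := sub_mem_fixedVectors hadd hc hc'
  have hsub0 : c - c' ≠ 0 := sub_ne_zero.mpr hne
  have hrel : (c - c') ⬝ᵥ β = 0 := by rw [sub_dotProduct, hcc', sub_self]
  rw [det_mooreMatrix_eq_zero_of_dotProduct_eq_zero hadd hq0 hsub0 (mem_fixedVectors.mp hsub)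
    hrel, zero_mul]
  refine det_mooreMatrix_eq_zero_of_dotProduct_eq_zero hadd hq0 (b := Fin.snoc (c - c') 0) ?_
    (mem_fixedVectors.mp (snoc_mem_fixedVectors hsub (zero_pow hq0))) ?_
  · intro h
    exact hsub0 (funext fun t => by simpa using congrFun h t.castSucc)
  · rw [snoc_dotProduct_snoc, hrel, zero_mul, add_zero]

theorem det_mooreMatrix (hadd : ∀ x y : F, (x + y) ^ q = x ^ q + y ^ q) (hq : 1 < q)
    (hS : #{x : F | x ^ q = x} = q) {k : ℕ} (α : Fin k → F) :
    (mooreMatrix q α).det = ∏ j : Fin k, ∏ c ∈ fixedVectors F q j,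
      (α j + c ⬝ᵥ fun t => α ⟨t, t.isLt.trans j.isLt⟩) := by
  induction k with
  | zero => simp
  | succ k ih =>
    have h := det_mooreMatrix_snoc hadd hq hS (Fin.init α) (α (Fin.last k))
    rw [Fin.snoc_init_self] at h
    rw [h, ih, Fin.prod_univ_castSucc]
    rfl

end Moore

namespace FiniteField

variable {F : Type*} [Field F] [Fintype F] {q n : ℕ}

theorem one_lt_of_card_eq_pow (hF : Fintype.card F = q ^ n) : 1 < q := by
  by_contra! hq
  have := Fintype.one_lt_card (α := F)
  rw [hF] at this
  exact this.not_ge (pow_le_one₀ (Nat.zero_le q) hq)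

theorem exists_eq_ringChar_pow_of_card_eq_pow (hF : Fintype.card F = q ^ n) :
    ∃ e, q = ringChar F ^ e := by
  obtain ⟨m, hp, hm⟩ := FiniteField.card F (ringChar F)
  have hn : n ≠ 0 := by
    rintro rfl
    exact Fintype.one_lt_card.ne' (hF.trans (pow_zero q))
  obtain ⟨e, -, he⟩ := (Nat.dvd_prime_pow hp).mp (hm ▸ hF ▸ dvd_pow_self q hn)
  exact ⟨e, he⟩

theorem add_pow_of_card_eq_pow (hF : Fintype.card F = q ^ n) (x y : F) :
    (x + y) ^ q = x ^ q + y ^ q := by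
  obtain ⟨e, rfl⟩ := exists_eq_ringChar_pow_of_card_eq_pow hF
  have := Fact.mk (CharP.char_is_prime F (ringChar F))
  exact add_pow_char_pow x y (ringChar F) e

theorem card_filter_pow_eq_self_of_card_eq_pow [DecidableEq F]
    (hF : Fintype.card F = q ^ n) : #{x : F | x ^ q = x} = q := by
  have hq := one_lt_of_card_eq_pow hF
  obtain ⟨e, he⟩ := exists_eq_ringChar_pow_of_card_eq_pow hF
  have hsep : (X ^ q - X : F[X]).Separable := by
    refine galois_poly_separable (ringChar F) q (he ▸ dvd_pow_self _ ?_)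
    rintro rfl
    simp [he] at hq
  have hne : (X ^ q - X : F[X]) ≠ 0 := X_pow_card_sub_X_ne_zero F hq
  have hsplit : (X ^ q - X : F[X]).Splits := by
    have h := Polynomial.splits_X_pow_nat_card_sub_X (K := F)
    rw [Nat.card_eq_fintype_card] at h
    refine h.of_dvd (X_pow_card_sub_X_ne_zero F Fintype.one_lt_card) ?_
    simpa [hF] using dvd_pow_pow_sub_self_of_dvd (r := (X : F[X])) (p := q) (one_dvd n)
  have hroots : (X ^ q - X : F[X]).roots.toFinset = ({x : F | x ^ q = x} : Finset F) := by
    ext x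
    simp [mem_roots hne, sub_eq_zero]
  rw [← hroots, Multiset.toFinset_card_of_nodup (nodup_roots hsep),
    splits_iff_card_roots.mp hsplit, X_pow_card_sub_X_natDegree_eq F hq]

end FiniteField

theorem stmt_13_general (q k n : ℕ)
    (F : Type) [Field F] [Fintype F] [DecidableEq F]
    (hF : Fintype.card F = q ^ n) (α : Fin k → F) :
    (Matrix.of fun r s : Fin k => α r ^ q ^ s.val).det =
      ∏ j : Fin k,
        ∏ c ∈ Finset.univ.filter (fun c : Fin j.val → F => ∀ t, c t ^ q = c t),
          (α j + ∑ t : Fin j.val, c t * α ⟨t.val, lt_trans t.isLt j.isLt⟩) :=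
  det_mooreMatrix (FiniteField.add_pow_of_card_eq_pow hF) (FiniteField.one_lt_of_card_eq_pow hF)
    (FiniteField.card_filter_pow_eq_self_of_card_eq_pow hF) α

theorem stmt_13 (q k n : ℕ) (hq : IsPrimePow q) (hn : 0 < n) (hk : k ≤ n)
    (F : Type) [Field F] [Fintype F] [DecidableEq F]
    (hF : Fintype.card F = q ^ n) (α : Fin k → F) :
    (Matrix.of fun r s : Fin k => α r ^ q ^ s.val).det =
      ∏ j : Fin k,
        ∏ c ∈ Finset.univ.filter (fun c : Fin j.val → F => ∀ t, c t ^ q = c t),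
          (α j + ∑ t : Fin j.val, c t * α ⟨t.val, lt_trans t.isLt j.isLt⟩) :=
  stmt_13_general q k n F hF α
end

section
/- Let q be a prime power, n a positive integer, and I = {i_0, i_1, …, i_{k-1}} a set of k distinct nonnegative integers with k ≤ n. Then I is a Moore exponent set for q and n if and only if every nonzero q-polynomial f(X) = a_0X^{q^{i_0}} + a_1X^{q^{i_1}} + ⋯ + a_{k-1}X^{q^{i_{k-1}}} with coefficients a_0, …, a_{k-1} ∈ F_{q^n}, not all zero, has fewer than q^k roots in F_{q^n} (equivalently, at most q^{k-1} roots, since the root set is an F_q-subspace). -/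
/-- `I` (given as the tuple `i : Fin k → ℕ` of exponents) is a Moore exponent set
for `q` relative to the field `F` (meant to be `F_{q^n}`): for every `α ∈ F^k`,
`det (α_r ^ (q ^ i_s)) = 0` iff the `α_r` are linearly dependent over the
subfield with `q` elements (the solutions of `x ^ q = x`). -/
def IsMooreExponentSet (q k : ℕ) (F : Type) [Field F] (i : Fin k → ℕ) : Prop :=
  ∀ α : Fin k → F,
    (Matrix.of fun r s : Fin k => α r ^ q ^ i s).det = 0 ↔
      ∃ c : Fin k → F, c ≠ 0 ∧ (∀ j, c j ^ q = c j) ∧ ∑ j, c j * α j = 0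

namespace MooreAux

variable (F : Type) [Field F] (p m : ℕ) [Fact p.Prime] [CharP F p]

/-- The subfield of solutions of `x ^ p ^ m = x`. -/
def E : Subfield F where
  carrier := {x | x ^ p ^ m = x}
  mul_mem' {a b} ha hb := by
    simp only [Set.mem_setOf_eq] at *
    rw [mul_pow, ha, hb]
  one_mem' := one_pow _
  add_mem' {a b} ha hb := by
    simp only [Set.mem_setOf_eq] at *
    rw [← iterateFrobenius_def (R := F) (p := p) (n := m), map_add,
      iterateFrobenius_def, iterateFrobenius_def, ha, hb]
  zero_mem' := zero_pow (pow_ne_zero _ (Fact.out : p.Prime).pos.ne')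
  neg_mem' {a} ha := by
    simp only [Set.mem_setOf_eq] at *
    rw [← iterateFrobenius_def (R := F) (p := p) (n := m), map_neg,
      iterateFrobenius_def, ha]
  inv_mem' a ha := by
    simp only [Set.mem_setOf_eq] at *
    rw [inv_pow, ha]

lemma mem_E (x : F) : x ∈ E F p m ↔ x ^ p ^ m = x := Iff.rfl

lemma pow_pow_of_fixed (x : F) (hx : x ^ p ^ m = x) (e : ℕ) : x ^ (p ^ m) ^ e = x := by
  induction e with
  | zero => simp
  | succ e ih => rw [pow_succ, pow_mul, ih, hx]

lemma sum_pow_pow {k : ℕ} (e : ℕ) (f : Fin k → F) :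
    (∑ r, f r) ^ (p ^ m) ^ e = ∑ r, f r ^ (p ^ m) ^ e := by
  simp only [← pow_mul]
  simp only [← iterateFrobenius_def (R := F) (p := p) (n := m * e)]
  exact map_sum (iterateFrobenius F p (m * e)) f Finset.univ

variable {k : ℕ}

/-- The space of roots of the `q`-polynomial with coefficients `a` and exponents `i`,
as a submodule over `E`. -/
def V (i : Fin k → ℕ) (a : Fin k → F) : Submodule (E F p m) F where
  carrier := {x | ∑ t, a t * x ^ (p ^ m) ^ i t = 0}
  add_mem' {x y} hx hy := by
    simp only [Set.mem_setOf_eq] at *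
    have h : ∀ t, a t * (x + y) ^ (p ^ m) ^ i t
        = a t * x ^ (p ^ m) ^ i t + a t * y ^ (p ^ m) ^ i t := by
      intro t
      have h2 := map_add (iterateFrobenius F p (m * i t)) x y
      simp only [iterateFrobenius_def, pow_mul] at h2
      rw [h2, mul_add]
    rw [Finset.sum_congr rfl fun t _ => h t, Finset.sum_add_distrib, hx, hy, add_zero]
  zero_mem' := by
    simp only [Set.mem_setOf_eq]
    have h : ∀ t, a t * (0 : F) ^ (p ^ m) ^ i t = 0 := by
      intro t
      rw [zero_pow (pow_ne_zero _ (pow_ne_zero _ (Fact.out : p.Prime).pos.ne')), mul_zero]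
    rw [Finset.sum_congr rfl fun t _ => h t, Finset.sum_const_zero]
  smul_mem' c x hx := by
    simp only [Set.mem_setOf_eq] at *
    have hsmul : c • x = (c : F) * x := rfl
    have h : ∀ t, a t * (c • x) ^ (p ^ m) ^ i t = (c : F) * (a t * x ^ (p ^ m) ^ i t) := by
      intro t
      rw [hsmul, mul_pow, pow_pow_of_fixed F p m (c : F) c.2 (i t)]
      ring
    rw [Finset.sum_congr rfl fun t _ => h t, ← Finset.mul_sum, hx, mul_zero]

lemma mem_V (i : Fin k → ℕ) (a : Fin k → F) (x : F) :
    x ∈ V F p m i a ↔ ∑ t, a t * x ^ (p ^ m) ^ i t = 0 := Iff.rfl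

end MooreAux

set_option maxHeartbeats 1000000 in
set_option synthInstance.maxHeartbeats 1000000 in
theorem stmt_14 (q k n : ℕ) (hq : IsPrimePow q) (hn : 0 < n) (hk : k ≤ n)
    (i : Fin k → ℕ) (hinj : Function.Injective i)
    (F : Type) [Field F] [Fintype F] (hF : Fintype.card F = q ^ n) :
    IsMooreExponentSet q k F i ↔
      ∀ a : Fin k → F, a ≠ 0 →
        Nat.card {x : F // ∑ t, a t * x ^ q ^ i t = 0} < q ^ k := by
  classical
  obtain ⟨p, m, hpp, hm, rfl⟩ := hq
  have hp : Fact p.Prime := ⟨hpp.nat_prime⟩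
  have hq1 : 1 < p ^ m := Nat.one_lt_pow hm.ne' hpp.nat_prime.one_lt
  -- characteristic
  haveI hchar : CharP F p := by
    haveI h0 := ringChar.charP F
    obtain ⟨n', hp', hcard⟩ := FiniteField.card F (ringChar F)
    have hdvd : p ∣ ringChar F := by
      have h1 : p ∣ Fintype.card F := by
        rw [hF, ← pow_mul]
        exact dvd_pow_self p (by positivity)
      rw [hcard] at h1
      exact hpp.nat_prime.dvd_of_dvd_pow h1
    have heq : p = ringChar F := (Nat.prime_dvd_prime_iff_eq hpp.nat_prime hp').1 hdvd
    exact heq ▸ h0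
  have hEpow := MooreAux.pow_pow_of_fixed F p m
  -- cardinality of E
  have hcardE : Fintype.card (MooreAux.E F p m) = p ^ m := by
    have hcardU : Fintype.card Fˣ = (p ^ m) ^ n - 1 := by rw [Fintype.card_units, hF]
    obtain ⟨g, hg⟩ := IsCyclic.exists_ofOrder_eq_natCard (α := Fˣ)
    have hgo : orderOf g = (p ^ m) ^ n - 1 := by rw [hg, Nat.card_eq_fintype_card, hcardU]
    have hdvd : (p ^ m - 1) ∣ ((p ^ m) ^ n - 1) := by
      simpa using Nat.sub_dvd_pow_sub_pow (p ^ m) 1 n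
    have hqn1 : 0 < (p ^ m) ^ n - 1 := by
      have : 1 < (p ^ m) ^ n := Nat.one_lt_pow hn.ne' hq1
      omega
    have hζo : orderOf (g ^ (((p ^ m) ^ n - 1) / (p ^ m - 1))) = p ^ m - 1 := by
      rw [(isOfFinOrder_of_finite g).orderOf_pow, hgo,
        Nat.gcd_eq_right (Nat.div_dvd_of_dvd hdvd), Nat.div_div_self hdvd hqn1.ne']
    have hprim : IsPrimitiveRoot
        ((g ^ (((p ^ m) ^ n - 1) / (p ^ m - 1)) : Fˣ) : F) (p ^ m - 1) := by
      have h1 := IsPrimitiveRoot.orderOf ((g ^ (((p ^ m) ^ n - 1) / (p ^ m - 1)) : Fˣ) : F)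
      rwa [orderOf_units, hζo] at h1
    have hq1' : 0 < p ^ m - 1 := by omega
    have h0notin : (0 : F) ∉ Polynomial.nthRootsFinset (p ^ m - 1) (1 : F) := by
      intro h
      have h2 := (Polynomial.mem_nthRootsFinset hq1' (1 : F)).1 h
      rw [zero_pow (by omega)] at h2
      exact zero_ne_one h2
    have hmem : ∀ x : F,
        x ∈ MooreAux.E F p m ↔ x ∈ insert (0 : F) (Polynomial.nthRootsFinset (p ^ m - 1) (1 : F)) := by
      intro x
      rw [MooreAux.mem_E, Finset.mem_insert, Polynomial.mem_nthRootsFinset hq1' (1 : F)]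
      constructor
      · intro hx
        rcases eq_or_ne x 0 with h | h
        · exact Or.inl h
        · refine Or.inr (mul_right_cancel₀ h ?_)
          rw [one_mul, ← pow_succ, Nat.sub_add_cancel (by omega)]
          exact hx
      · rintro (rfl | hx)
        · exact zero_pow (by omega)
        · calc x ^ p ^ m = x ^ (p ^ m - 1) * x := by
                rw [← pow_succ, Nat.sub_add_cancel (by omega)]
            _ = x := by rw [hx, one_mul]
    calc Fintype.card (MooreAux.E F p m)
        = (insert (0 : F) (Polynomial.nthRootsFinset (p ^ m - 1) (1 : F))).card := by
          rw [← Fintype.card_coe]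
          exact Fintype.card_congr (Equiv.subtypeEquivRight hmem)
      _ = p ^ m := by
          rw [Finset.card_insert_of_notMem h0notin, hprim.card_nthRootsFinset]
          omega
  -- cardinality of the root space
  have cardV : ∀ a : Fin k → F, ∀ (_ : Fintype (MooreAux.V F p m i a)),
      Nat.card {x : F // ∑ t, a t * x ^ (p ^ m) ^ i t = 0}
        = (p ^ m) ^ Module.finrank (MooreAux.E F p m) (MooreAux.V F p m i a) := by
    intro a _
    rw [Nat.card_congr (Equiv.subtypeEquivRight
      fun x => (MooreAux.mem_V F p m i a x).symm)]
    rw [Nat.card_eq_fintype_card]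
    rw [Module.card_eq_pow_finrank (K := MooreAux.E F p m) (V := MooreAux.V F p m i a), hcardE]
  constructor
  · -- Moore ⇒ few roots
    intro hmoore a ha
    haveI : Fintype (MooreAux.V F p m i a) := Fintype.ofFinite _
    rw [cardV a inferInstance]
    refine Nat.pow_lt_pow_right hq1 ?_
    by_contra hge
    push_neg at hge
    haveI : Module.Finite (MooreAux.E F p m) (MooreAux.V F p m i a) :=
      (Module.finite_iff_finite (R := MooreAux.E F p m)).2 inferInstance
    set b := Module.finBasis (MooreAux.E F p m) (MooreAux.V F p m i a) with hb
    have hli : LinearIndependent (MooreAux.E F p m) fun r : Fin k => ((b (Fin.castLE hge r) : _) : F) := by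
      have h1 : LinearIndependent (MooreAux.E F p m) fun r : Fin k => b (Fin.castLE hge r) :=
        b.linearIndependent.comp _ (Fin.castLE_injective hge)
      exact h1.map' (MooreAux.V F p m i a).subtype (MooreAux.V F p m i a).ker_subtype
    set α : Fin k → F := fun r => ((b (Fin.castLE hge r) : _) : F) with hα
    have hdet : (Matrix.of fun r s : Fin k => α r ^ (p ^ m) ^ i s).det = 0 := by
      rw [← Matrix.exists_mulVec_eq_zero_iff]
      refine ⟨a, ha, ?_⟩
      funext r
      have hmemr : ∑ t, a t * α r ^ (p ^ m) ^ i t = 0 :=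
        (MooreAux.mem_V F p m i a (α r)).1 (b (Fin.castLE hge r)).2
      simp only [Matrix.mulVec, dotProduct, Matrix.of_apply, Pi.zero_apply]
      rw [← hmemr]
      exact Finset.sum_congr rfl fun t _ => mul_comm _ _
    obtain ⟨c, hc0, hcq, hsum⟩ := (hmoore α).1 hdet
    rw [Fintype.linearIndependent_iff] at hli
    have hz := hli (fun j => (⟨c j, hcq j⟩ : MooreAux.E F p m)) ?_
    · apply hc0
      funext j
      exact congrArg Subtype.val (hz j)
    · rw [← hsum]
      exact Finset.sum_congr rfl fun j _ => rfl
  · -- few roots ⇒ Moore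
    intro hroots α
    constructor
    · intro hdet
      obtain ⟨a, ha0, hmv⟩ := Matrix.exists_mulVec_eq_zero_iff.2 hdet
      haveI : Fintype (MooreAux.V F p m i a) := Fintype.ofFinite _
      haveI : Module.Finite (MooreAux.E F p m) (MooreAux.V F p m i a) :=
        (Module.finite_iff_finite (R := MooreAux.E F p m)).2 inferInstance
      have hαV : ∀ r, α r ∈ MooreAux.V F p m i a := by
        intro r
        rw [MooreAux.mem_V]
        have h1 := congrFun hmv r
        simp only [Matrix.mulVec, dotProduct, Matrix.of_apply, Pi.zero_apply] at h1
        rw [← h1]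
        exact Finset.sum_congr rfl fun t _ => mul_comm _ _
      have hcard := hroots a ha0
      rw [cardV a inferInstance] at hcard
      have hdim : Module.finrank (MooreAux.E F p m) (MooreAux.V F p m i a) < k :=
        (Nat.pow_lt_pow_iff_right hq1).1 hcard
      have hnli : ¬ LinearIndependent (MooreAux.E F p m)
          fun r : Fin k => (⟨α r, hαV r⟩ : MooreAux.V F p m i a) := by
        intro h
        have h2 := h.fintype_card_le_finrank
        simp only [Fintype.card_fin] at h2
        omega
      rw [Fintype.not_linearIndependent_iff] at hnli
      obtain ⟨g, hg, j0, hj0⟩ := hnli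
      refine ⟨fun j => (g j : F), ?_, fun j => (g j).2, ?_⟩
      · intro h
        apply hj0
        have h2 : (g j0 : F) = 0 := congrFun h j0
        exact Subtype.ext h2
      · calc ∑ j, (g j : F) * α j
            = ∑ j, ((g j • (⟨α j, hαV j⟩ : MooreAux.V F p m i a) : MooreAux.V F p m i a) : F) :=
              Finset.sum_congr rfl fun j _ => rfl
          _ = ((∑ j, g j • (⟨α j, hαV j⟩ : MooreAux.V F p m i a) : MooreAux.V F p m i a) : F) :=
              (AddSubmonoidClass.coe_finset_sum _ _).symm
          _ = 0 := by rw [hg]; rfl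
    · rintro ⟨c, hc0, hcq, hsum⟩
      rw [← Matrix.exists_vecMul_eq_zero_iff]
      refine ⟨c, hc0, ?_⟩
      funext s
      simp only [Matrix.vecMul, dotProduct, Matrix.of_apply, Pi.zero_apply]
      calc ∑ r, c r * α r ^ (p ^ m) ^ i s
          = ∑ r, (c r * α r) ^ (p ^ m) ^ i s := by
            refine Finset.sum_congr rfl fun r _ => ?_
            rw [mul_pow, hEpow (c r) (hcq r) (i s)]
        _ = (∑ r, c r * α r) ^ (p ^ m) ^ i s := (MooreAux.sum_pow_pow F p m (i s) _).symm
        _ = 0 := by rw [hsum, zero_pow (by positivity)]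
end

section
/- Let F ∈ F_q[X_1, …, X_m] be a polynomial of total degree d that is irreducible over F_q. Then there exists a natural number s dividing d such that, over the algebraic closure of F_q, F factors as a nonzero constant times a product of s absolutely irreducible polynomials, each of total degree d/s. -/
open MvPolynomial

section Aux

variable {σ : Type*} {R : Type*}

lemma aux_eq_C_of_totalDegree_eq_zero [CommSemiring R] {p : MvPolynomial σ R}
    (h : p.totalDegree = 0) : p = C (coeff 0 p) := by
  classical
  ext n
  rcases eq_or_ne n 0 with rfl | hn
  · simp
  · rw [coeff_C, if_neg (Ne.symm hn)]
    by_contra hc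
    have hmem : n ∈ p.support := mem_support_iff.mpr hc
    have hz := (totalDegree_eq_zero_iff (σ := σ) (R := R) p).mp h n hmem
    exact hn (Finsupp.ext fun i => hz i)

lemma aux_hc_ne [CommSemiring R] {p : MvPolynomial σ R} (hp : p ≠ 0) :
    homogeneousComponent p.totalDegree p ≠ 0 := by
  classical
  have hne : p.support.Nonempty := support_nonempty.mpr hp
  obtain ⟨n, hn, hsup⟩ :=
    Finset.exists_mem_eq_sup p.support hne (fun s : σ →₀ ℕ => s.sum fun _ e => e)
  intro h0
  have hdeg : n.degree = p.totalDegree := by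
    rw [totalDegree, hsup]
    rfl
  have := coeff_homogeneousComponent (n := p.totalDegree) (φ := p) n
  rw [h0, if_pos hdeg] at this
  exact mem_support_iff.mp hn this.symm

lemma aux_totalDegree_mul [CommRing R] [IsDomain R] {a b : MvPolynomial σ R}
    (ha : a ≠ 0) (hb : b ≠ 0) :
    (a * b).totalDegree = a.totalDegree + b.totalDegree := by
  classical
  refine le_antisymm (totalDegree_mul a b) ?_
  set da := a.totalDegree with hda
  set db := b.totalDegree with hdb
  have key : homogeneousComponent (da + db) (a * b)
      = homogeneousComponent da a * homogeneousComponent db b := by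
    have expand : a * b = ∑ i ∈ Finset.range (da + 1), ∑ j ∈ Finset.range (db + 1),
        homogeneousComponent i a * homogeneousComponent j b := by
      conv_lhs => rw [← sum_homogeneousComponent a, ← sum_homogeneousComponent b]
      rw [Finset.sum_mul_sum]
    rw [expand]
    simp only [map_sum]
    have hterm : ∀ i ∈ Finset.range (da + 1), ∀ j ∈ Finset.range (db + 1),
        homogeneousComponent (da + db) (homogeneousComponent i a * homogeneousComponent j b)
          = if i = da ∧ j = db then homogeneousComponent da a * homogeneousComponent db b
            else 0 := by
      intro i hi j hj
      have hmem : homogeneousComponent i a * homogeneousComponent j b ∈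
          homogeneousSubmodule σ R (i + j) := by
        rw [mem_homogeneousSubmodule]
        exact (homogeneousComponent_isHomogeneous i a).mul (homogeneousComponent_isHomogeneous j b)
      rw [homogeneousComponent_of_mem hmem]
      rw [Finset.mem_range] at hi hj
      by_cases hij : i = da ∧ j = db
      · rw [if_pos (by omega), if_pos hij, hij.1, hij.2]
      · rw [if_neg (by omega), if_neg hij]
    calc (∑ i ∈ Finset.range (da + 1), ∑ j ∈ Finset.range (db + 1),
            homogeneousComponent (da + db)
              (homogeneousComponent i a * homogeneousComponent j b))
        = ∑ i ∈ Finset.range (da + 1), ∑ j ∈ Finset.range (db + 1),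
            (if i = da ∧ j = db then homogeneousComponent da a * homogeneousComponent db b
              else 0) := by
          refine Finset.sum_congr rfl fun i hi => ?_
          exact Finset.sum_congr rfl fun j hj => hterm i hi j hj
      _ = homogeneousComponent da a * homogeneousComponent db b := by
          rw [Finset.sum_comm]
          rw [Finset.sum_eq_single db]
          · rw [Finset.sum_eq_single da]
            · simp
            · intro i _ hi; rw [if_neg (by tauto)]
            · intro h; exact absurd (Finset.mem_range.mpr (by omega)) h
          · intro j _ hj
            apply Finset.sum_eq_zero
            intro i _
            rw [if_neg (by tauto)]
          · intro h; exact absurd (Finset.mem_range.mpr (by omega)) h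
  have hprod : homogeneousComponent (da + db) (a * b) ≠ 0 := by
    rw [key]; exact mul_ne_zero (aux_hc_ne ha) (aux_hc_ne hb)
  by_contra hlt
  push_neg at hlt
  exact hprod (homogeneousComponent_eq_zero _ _ hlt)

lemma aux_isUnit [CommRing R] [IsDomain R] {u : MvPolynomial σ R} (hu : IsUnit u) :
    ∃ c : R, IsUnit c ∧ u = C c := by
  obtain ⟨v, hv⟩ := hu.exists_right_inv
  have hu0 : u ≠ 0 := fun h => by simp [h] at hv
  have hv0 : v ≠ 0 := fun h => by simp [h] at hv
  have hdeg : u.totalDegree = 0 := by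
    have h1 := aux_totalDegree_mul hu0 hv0
    rw [hv, totalDegree_one] at h1
    omega
  refine ⟨coeff 0 u, ?_, aux_eq_C_of_totalDegree_eq_zero hdeg⟩
  have := congrArg constantCoeff hv
  rw [map_mul, map_one] at this
  exact IsUnit.of_mul_eq_one _ (by rw [← constantCoeff_eq]; exact this)

lemma aux_prod_dvd {M : Type*} [CommMonoidWithZero M] [IsCancelMulZero M] (g : ℕ → M) (N : M) :
    ∀ n : ℕ, (∀ i, i < n → Prime (g i)) →
      (∀ i j, i < j → j < n → ¬ Associated (g i) (g j)) →
      (∀ i, i < n → g i ∣ N) → (∏ i ∈ Finset.range n, g i) ∣ N := by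
  intro n
  induction n generalizing N with
  | zero => simp
  | succ n ih =>
    intro hpr hassoc hdvd
    obtain ⟨N', rfl⟩ := hdvd n (Nat.lt_succ_self n)
    have hstep : ∀ i, i < n → g i ∣ N' := by
      intro i hi
      have hdi : g i ∣ g n * N' := hdvd i (by omega)
      rcases (hpr i (by omega)).2.2 _ _ hdi with h | h
      · exact absurd ((hpr i (by omega)).irreducible.associated_of_dvd
          (hpr n (Nat.lt_succ_self n)).irreducible h) (hassoc i n hi (Nat.lt_succ_self n))
      · exact h
    rw [Finset.prod_range_succ, mul_comm]
    exact mul_dvd_mul_left (g n)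
      (ih N' (fun i hi => hpr i (by omega)) (fun i j hij hj => hassoc i j hij (by omega))
        (fun i hi => hstep i hi))

lemma aux_fixed {K L : Type*} [Field K] [Fintype K] [Field L] (φ : K →+* L) (x : L)
    (h : x ^ Fintype.card K = x) : ∃ a : K, φ a = x := by
  classical
  have hq1 : 1 < Fintype.card K := Fintype.one_lt_card
  set P : Polynomial L := Polynomial.X ^ Fintype.card K - Polynomial.X with hPdef
  have hP0 : P ≠ 0 := FiniteField.X_pow_card_sub_X_ne_zero L hq1
  have hdeg : P.natDegree = Fintype.card K := FiniteField.X_pow_card_sub_X_natDegree_eq L hq1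
  set T : Finset L := Finset.univ.image φ with hTdef
  have hTcard : T.card = Fintype.card K := by
    rw [hTdef, Finset.card_image_of_injective _ φ.injective, Finset.card_univ]
  have hTroots : T ⊆ P.roots.toFinset := by
    intro y hy
    obtain ⟨a, -, rfl⟩ := Finset.mem_image.mp hy
    rw [Multiset.mem_toFinset, Polynomial.mem_roots hP0]
    simp only [hPdef, Polynomial.IsRoot, Polynomial.eval_sub, Polynomial.eval_pow,
      Polynomial.eval_X, sub_eq_zero, ← map_pow, FiniteField.pow_card]
  by_contra hx
  push_neg at hx
  have hxT : x ∉ T := by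
    intro hmem
    obtain ⟨a, -, rfl⟩ := Finset.mem_image.mp hmem
    exact hx a rfl
  have hxroot : x ∈ P.roots.toFinset := by
    rw [Multiset.mem_toFinset, Polynomial.mem_roots hP0]
    simp only [hPdef, Polynomial.IsRoot, Polynomial.eval_sub, Polynomial.eval_pow,
      Polynomial.eval_X, sub_eq_zero, h]
  have hsub : insert x T ⊆ P.roots.toFinset := Finset.insert_subset hxroot hTroots
  have hcard := Finset.card_le_card hsub
  rw [Finset.card_insert_of_notMem hxT, hTcard] at hcard
  have hle : P.roots.toFinset.card ≤ Fintype.card K :=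
    le_trans (Multiset.toFinset_card_le _) (by rw [← hdeg]; exact Polynomial.card_roots' P)
  omega

lemma aux_descend {K L : Type*} [Field K] [Field L] {σ : Type*} (φ : K →+* L)
    (P : MvPolynomial σ L) (h : ∀ n : σ →₀ ℕ, ∃ a : K, φ a = P.coeff n) :
    ∃ P₀ : MvPolynomial σ K, map φ P₀ = P := by
  classical
  choose u hu using h
  refine ⟨∑ n ∈ P.support, monomial n (u n), ?_⟩
  rw [map_sum]
  simp_rw [map_monomial, hu]
  exact support_sum_monomial_coeff P

lemma aux_totalDegree_map {K L : Type*} [CommSemiring K] [CommSemiring L] {σ : Type*}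
    (φ : K →+* L) (hφ : Function.Injective φ) (p : MvPolynomial σ K) :
    (map φ p).totalDegree = p.totalDegree := by
  rw [totalDegree_eq, totalDegree_eq, support_map_of_injective p hφ]

lemma aux_totalDegree_prod {ι : Type*} [CommRing R] [IsDomain R] (s : Finset ι)
    (f : ι → MvPolynomial σ R) (hf : ∀ i ∈ s, f i ≠ 0) :
    (∏ i ∈ s, f i).totalDegree = ∑ i ∈ s, (f i).totalDegree := by
  classical
  induction s using Finset.cons_induction with
  | empty => simp
  | cons a s ha ih =>
    rw [Finset.prod_cons, Finset.sum_cons,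
      aux_totalDegree_mul (hf a (Finset.mem_cons_self a s))
        (Finset.prod_ne_zero_iff.mpr fun i hi => hf i (Finset.mem_cons_of_mem hi)),
      ih fun i hi => hf i (Finset.mem_cons_of_mem hi)]

end Aux

theorem stmt_17 (q m d : ℕ) (hq : IsPrimePow q)
    (K : Type) [Field K] [Fintype K] (hK : Fintype.card K = q)
    (F : MvPolynomial (Fin m) K) (hd : F.totalDegree = d) (hirr : Irreducible F) :
    ∃ s : ℕ, s ∣ d ∧
      ∃ (c : AlgebraicClosure K) (g : Fin s → MvPolynomial (Fin m) (AlgebraicClosure K)),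
        c ≠ 0 ∧
        (∀ t, Irreducible (g t) ∧ (g t).totalDegree = d / s) ∧
        MvPolynomial.map (algebraMap K (AlgebraicClosure K)) F = C c * ∏ t, g t := by
  classical
  subst hK
  subst hd
  clear hq
  set L := AlgebraicClosure K with hL
  set φ := algebraMap K L with hφdef
  have hφinj : Function.Injective φ := φ.injective
  haveI : CharP K (ringChar K) := ringChar.charP K
  set p := ringChar K with hpdef
  obtain ⟨npos, hp, hcard⟩ := FiniteField.card K p
  haveI : CharP L p := charP_of_injective_algebraMap hφinj p
  haveI : ExpChar L p := ExpChar.prime hp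
  set nn : ℕ := (npos : ℕ) with hnn
  set Fr : ℕ → (L →+* L) := fun a => iterateFrobenius L p (nn * a) with hFrdef
  have hqpos : 0 < Fintype.card K := Fintype.card_pos
  have hFr_apply : ∀ a (x : L), Fr a x = x ^ (Fintype.card K) ^ a := by
    intro a x
    rw [hFrdef]
    simp only [iterateFrobenius_def]
    rw [hcard, ← pow_mul]
  have hFr_inj : ∀ a, Function.Injective (Fr a) := fun a => (Fr a).injective
  have hFr_surj : ∀ a (y : L), ∃ x, Fr a x = y := by
    intro a y
    obtain ⟨x, hx⟩ := IsAlgClosed.exists_pow_nat_eq y (n := (Fintype.card K) ^ a)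
      (pow_pos hqpos a)
    exact ⟨x, by rw [hFr_apply, hx]⟩
  have hFr_comp : ∀ a b, (Fr a).comp (Fr b) = Fr (a + b) := by
    intro a b
    ext x
    rw [RingHom.comp_apply, hFr_apply, hFr_apply, hFr_apply, ← pow_mul,
      ← pow_add, add_comm a b]
  have hFr_fix_φ : ∀ a (c : K), Fr a (φ c) = φ c := by
    intro a c
    rw [hFr_apply, ← map_pow, FiniteField.pow_card_pow]
  have hmap_comm : ∀ a (A : MvPolynomial (Fin m) K), map (Fr a) (map φ A) = map φ A := by
    intro a A
    rw [map_map]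
    have hc : (Fr a).comp φ = φ := RingHom.ext fun c => hFr_fix_φ a c
    rw [hc]
  -- periodicity of each element
  have hfixper : ∀ x : L, ∃ a, 0 < a ∧ Fr a x = x := by
    intro x
    have halg : IsAlgebraic K x := Algebra.IsAlgebraic.isAlgebraic x
    have hint : IsIntegral K x := halg.isIntegral
    set P := minpoly K x with hPdef
    have hP0 : P.map φ ≠ 0 :=
      Polynomial.map_ne_zero (minpoly.ne_zero hint)
    have hroot : ∀ a, Fr a x ∈ (P.map φ).roots.toFinset := by
      intro a
      rw [Multiset.mem_toFinset, Polynomial.mem_roots hP0]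
      have h0 : Polynomial.eval₂ φ x P = 0 := by
        rw [← Polynomial.aeval_def]
        exact minpoly.aeval K x
      have h1 := congrArg (Fr a) h0
      rw [map_zero, Polynomial.hom_eval₂] at h1
      have hcomp : (Fr a).comp φ = φ := RingHom.ext fun c => hFr_fix_φ a c
      rw [hcomp] at h1
      rw [Polynomial.IsRoot, Polynomial.eval_map]
      exact h1
    obtain ⟨a, b, hab, heq⟩ : ∃ a b : ℕ, a ≠ b ∧ Fr a x = Fr b x := by
      obtain ⟨a, b, hab, h⟩ := Finite.exists_ne_map_eq_of_infinite
        (fun a : ℕ => (⟨Fr a x, hroot a⟩ : {y // y ∈ (P.map φ).roots.toFinset}))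
      exact ⟨a, b, hab, by simpa using congrArg Subtype.val h⟩
    rcases Nat.lt_or_ge a b with hlt | hge
    · refine ⟨b - a, by omega, ?_⟩
      have : Fr a (Fr (b - a) x) = Fr a x := by
        rw [← RingHom.comp_apply, hFr_comp]
        rw [show a + (b - a) = b by omega]
        exact heq.symm
      exact hFr_inj a this
    · have hlt : b < a := by omega
      refine ⟨a - b, by omega, ?_⟩
      have : Fr b (Fr (a - b) x) = Fr b x := by
        rw [← RingHom.comp_apply, hFr_comp]
        rw [show b + (a - b) = a by omega]
        exact heq
      exact hFr_inj b this
  -- iterated fixing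
  have hiter : ∀ (y : L) (b : ℕ), Fr b y = y → ∀ k, Fr (k * b) y = y := by
    intro y b hy k
    induction k with
    | zero => simp [hFr_apply]
    | succ k ih =>
      have hkb : (k + 1) * b = k * b + b := by ring
      rw [hkb, ← hFr_comp, RingHom.comp_apply, hy, ih]
  -- basic facts about F and mF
  set mF := map φ F with hmFdef
  have hF0 : F ≠ 0 := hirr.ne_zero
  have hmF0 : mF ≠ 0 := fun h => hF0 (map_injective φ hφinj (by rw [map_zero]; exact h))
  have hmFdeg : mF.totalDegree = F.totalDegree := aux_totalDegree_map φ hφinj F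
  have hmF_notunit : ¬ IsUnit mF := by
    intro hu
    obtain ⟨c, hc, hCc⟩ := aux_isUnit hu
    have hdz : F.totalDegree = 0 := by rw [← hmFdeg, hCc, totalDegree_C]
    have hFC := aux_eq_C_of_totalDegree_eq_zero hdz
    apply hirr.not_isUnit
    have hc0 : coeff 0 F ≠ 0 := fun h => hF0 (by rw [hFC, h, map_zero])
    rw [hFC]
    exact (isUnit_iff_ne_zero.mpr hc0).map C
  obtain ⟨g', hg'irr, hg'dvd⟩ := WfDvdMonoid.exists_irreducible_factor hmF_notunit hmF0
  have hg'0 : g' ≠ 0 := hg'irr.ne_zero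
  obtain ⟨n₀, hn₀⟩ := support_nonempty.mpr hg'0
  have hc0 : coeff n₀ g' ≠ 0 := mem_support_iff.mp hn₀
  set g₀ := C (coeff n₀ g')⁻¹ * g' with hg₀def
  have hunit : IsUnit (C (coeff n₀ g')⁻¹ : MvPolynomial (Fin m) L) :=
    (isUnit_iff_ne_zero.mpr (inv_ne_zero hc0)).map C
  have hassoc0 : Associated g' g₀ := by
    refine ⟨hunit.unit, ?_⟩
    rw [IsUnit.unit_spec, hg₀def, mul_comm]
  have hg₀irr : Irreducible g₀ := hassoc0.irreducible hg'irr
  have hg₀dvd : g₀ ∣ mF := dvd_trans hassoc0.symm.dvd hg'dvd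
  have hcoeff₀ : coeff n₀ g₀ = 1 := by
    rw [hg₀def, coeff_C_mul, inv_mul_cancel₀ hc0]
  have hg₀0 : g₀ ≠ 0 := hg₀irr.ne_zero
  -- existence of exact period for g₀
  have hexists : ∃ a, 0 < a ∧ map (Fr a) g₀ = g₀ := by
    have haux : ∀ S : Finset ((Fin m) →₀ ℕ), ∃ a, 0 < a ∧
        ∀ nn' ∈ S, Fr a (coeff nn' g₀) = coeff nn' g₀ := by
      intro S
      induction S using Finset.induction with
      | empty => exact ⟨1, one_pos, by simp⟩
      | @insert x T hxT ih =>
        obtain ⟨a, ha0, ha⟩ := ih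
        obtain ⟨b, hb0, hb⟩ := hfixper (coeff x g₀)
        refine ⟨a * b, by positivity, ?_⟩
        intro nn' hnn'
        rcases Finset.mem_insert.mp hnn' with rfl | hmem
        · rw [show a * b = a * b from rfl]
          exact hiter _ b hb a
        · rw [mul_comm a b]
          exact hiter _ a (ha nn' hmem) b
    obtain ⟨a, ha0, ha⟩ := haux g₀.support
    refine ⟨a, ha0, ?_⟩
    ext nn'
    rw [coeff_map]
    by_cases h : nn' ∈ g₀.support
    · exact ha nn' h
    · rw [notMem_support_iff.mp h, map_zero]
  set s := Nat.find hexists with hsdef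
  obtain ⟨hs0, hsfix⟩ := Nat.find_spec hexists
  have hsmin : ∀ b, 0 < b → b < s → map (Fr b) g₀ ≠ g₀ :=
    fun b hb hbs hfb => Nat.find_min hexists hbs ⟨hb, hfb⟩
  set f : ℕ → MvPolynomial (Fin m) L := fun j => map (Fr j) g₀ with hfdef
  have hf_shift : ∀ a b, map (Fr a) (f b) = f (a + b) := by
    intro a b
    show map (Fr a) (map (Fr b) g₀) = map (Fr (a + b)) g₀
    rw [map_map, hFr_comp]
  have hf0 : f 0 = g₀ := by
    show map (Fr 0) g₀ = g₀
    ext nn'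
    rw [coeff_map, hFr_apply, pow_zero, pow_one]
  have hfirr : ∀ j, Irreducible (f j) := by
    intro j
    have hbij : Function.Bijective (Fr j) := ⟨hFr_inj j, fun y => hFr_surj j y⟩
    let τ : L ≃+* L := RingEquiv.ofBijective (Fr j) hbij
    have hfj : f j = mapEquiv (Fin m) τ g₀ := rfl
    rw [hfj]
    exact (MulEquiv.irreducible_iff (mapEquiv (Fin m) τ)).mpr hg₀irr
  have hfdvd : ∀ j, f j ∣ mF := by
    intro j
    have h1 : map (Fr j) g₀ ∣ map (Fr j) mF := map_dvd (map (Fr j)) hg₀dvd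
    rwa [hmFdef, hmap_comm j F] at h1
  have hfdeg : ∀ j, (f j).totalDegree = g₀.totalDegree :=
    fun j => aux_totalDegree_map _ (hFr_inj j) g₀
  have hf0' : ∀ j, f j ≠ 0 := fun j => (hfirr j).ne_zero
  have hfcoeff : ∀ j, coeff n₀ (f j) = 1 := by
    intro j
    show coeff n₀ (map (Fr j) g₀) = 1
    rw [coeff_map, hcoeff₀, map_one]
  -- pairwise non-associated
  have hnassoc : ∀ i j, i < j → j < s → ¬ Associated (f i) (f j) := by
    intro i j hij hjs hA
    obtain ⟨u, hu⟩ := hA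
    obtain ⟨c, hcunit, hCc⟩ := aux_isUnit u.isUnit
    obtain ⟨c', hc'⟩ := hFr_surj i c
    have hfj : f j = map (Fr i) (f (j - i)) := by
      rw [hf_shift]
      congr 1
      omega
    have hmain : map (Fr i) (f (j - i)) = map (Fr i) (g₀ * C c') := by
      rw [← hfj, ← hu, hCc, map_mul, map_C, hc']
    have heq : f (j - i) = g₀ * C c' := map_injective _ (hFr_inj i) hmain
    have hc'1 : c' = 1 := by
      have h1 := hfcoeff (j - i)
      rw [heq, mul_comm, coeff_C_mul, hcoeff₀, mul_one] at h1
      exact h1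
    apply hsmin (j - i) (by omega) (by omega)
    show map (Fr (j - i)) g₀ = g₀
    have : f (j - i) = g₀ := by rw [heq, hc'1, map_one, mul_one]
    exact this
  -- the product over the orbit
  set H := ∏ j ∈ Finset.range s, f j with hHdef
  have hprimes : ∀ i, i < s → Prime (f i) :=
    fun i _ => UniqueFactorizationMonoid.irreducible_iff_prime.mp (hfirr i)
  have hHdvd : H ∣ mF := aux_prod_dvd f mF s hprimes hnassoc (fun i _ => hfdvd i)
  have hH0 : H ≠ 0 := Finset.prod_ne_zero_iff.mpr fun i _ => hf0' i
  have hHfix : map (Fr 1) H = H := by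
    rw [hHdef, map_prod]
    have hstep : ∀ j, map (Fr 1) (f j) = f (j + 1) := by
      intro j
      rw [hf_shift, add_comm]
    obtain ⟨t, hts⟩ : ∃ t, s = t + 1 := ⟨s - 1, by omega⟩
    calc (∏ j ∈ Finset.range s, map (Fr 1) (f j))
        = ∏ j ∈ Finset.range s, f (j + 1) :=
          Finset.prod_congr rfl fun j _ => hstep j
      _ = ∏ j ∈ Finset.range s, f j := by
          rw [hts, Finset.prod_range_succ, Finset.prod_range_succ']
          have hfs : f (t + 1) = g₀ := by rw [← hts]; exact hsfix
          rw [hfs, hf0]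
  obtain ⟨Q, hQ⟩ := hHdvd
  have hQfix : map (Fr 1) Q = Q := by
    have h1 : H * map (Fr 1) Q = H * Q := by
      have h2 := hmap_comm 1 F
      rw [← hmFdef] at h2
      calc H * map (Fr 1) Q = map (Fr 1) H * map (Fr 1) Q := by rw [hHfix]
        _ = map (Fr 1) (H * Q) := by rw [map_mul]
        _ = map (Fr 1) mF := by rw [← hQ]
        _ = mF := h2
        _ = H * Q := hQ
    exact mul_left_cancel₀ hH0 h1
  have hHQdesc : ∀ (W : MvPolynomial (Fin m) L), map (Fr 1) W = W →
      ∃ W₀, map φ W₀ = W := by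
    intro W hW
    apply aux_descend
    intro nn'
    apply aux_fixed φ
    have h1 := congrArg (coeff nn') hW
    rw [coeff_map, hFr_apply, pow_one] at h1
    exact h1
  obtain ⟨Q₀, hQ₀⟩ := hHQdesc Q hQfix
  obtain ⟨H₀, hH₀⟩ := hHQdesc H hHfix
  have hFH : F = H₀ * Q₀ := by
    apply map_injective φ hφinj
    rw [map_mul, hH₀, hQ₀, ← hQ]
  have hH₀nu : ¬ IsUnit H₀ := by
    intro hu
    have hH_unit : IsUnit H := by
      rw [← hH₀]
      exact hu.map (map φ)
    have hf0dvd : f 0 ∣ H := Finset.dvd_prod_of_mem f (Finset.mem_range.mpr hs0)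
    exact (hfirr 0).not_isUnit (isUnit_of_dvd_unit hf0dvd hH_unit)
  have hQ₀u : IsUnit Q₀ := (hirr.isUnit_or_isUnit hFH).resolve_left hH₀nu
  obtain ⟨c₁, hc₁u, hc₁⟩ := aux_isUnit hQ₀u
  have hQeq : Q = C (φ c₁) := by rw [← hQ₀, hc₁, map_C]
  -- degrees
  set e := g₀.totalDegree with hedef
  have hHdeg : H.totalDegree = s * e := by
    rw [hHdef, aux_totalDegree_prod _ _ (fun i _ => hf0' i)]
    rw [Finset.sum_congr rfl fun i _ => hfdeg i, Finset.sum_const, Finset.card_range,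
      smul_eq_mul]
  have hQ0 : Q ≠ 0 := by
    rw [hQeq]
    intro h
    have : φ c₁ = 0 := by
      have := congrArg (coeff 0) h
      rwa [coeff_C, if_pos rfl, coeff_zero] at this
    exact hc₁u.ne_zero (hφinj (by rw [this, map_zero]))
  have hdeq : F.totalDegree = s * e := by
    rw [← hmFdeg, hQ, aux_totalDegree_mul hH0 hQ0, hHdeg, hQeq, totalDegree_C, add_zero]
  refine ⟨s, ⟨e, hdeq⟩, φ c₁, fun t => f t, ?_, ?_, ?_⟩
  · exact fun h => hc₁u.ne_zero (hφinj (by rw [h, map_zero]))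
  · intro t
    refine ⟨hfirr t, ?_⟩
    rw [hfdeg, hdeq, Nat.mul_div_cancel_left e hs0]
  · have final : mF = C (φ c₁) * ∏ t : Fin s, f (t : ℕ) := by
      rw [hQ, hQeq, mul_comm (H) (C (φ c₁))]
      congr 1
      rw [hHdef]
      exact (Fin.prod_univ_eq_prod_range (fun j => f j) s).symm
    exact final
end
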